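/- Let A, B and T be finite subsets of an abelian group G with |A| ≥ |B| ≥ k ≥ 1 and |A| ≥ |T|. If r_{A,−B}(x) ≤ k for all x ∈ G \ T, then ∑_{g ∈ G} r_{A,B}(g)·(r_{A,B}(g) − 1) ≤ |T||B|(|B| − k) + (k−1)|A||B|. -/

import Mathlib

open scoped Pointwise

/-- `rep A B g` is the number of representations of `g` as `a + b` with `a ∈ A`, `b ∈ B`. -/
def rep {G : Type*} [AddCommGroup G] [DecidableEq G] (A B : Finset G) (g : G) : ℕ :=
  ((A ×ˢ B).filter (fun p => p.1 + p.2 = g)).card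

/-!
Since `a₁ + b₁ = a₂ + b₂ ↔ a₁ - b₂ = a₂ - b₁`, the additive energy
`E[A, B] = ∑ r_{A,B}(g) ^ 2` equals `E[A, -B] = ∑ r_{A,-B}(x) ^ 2`. Bounding one factor
`r_{A,-B}(x)` by `|B|` for `x ∈ T` and by `k` otherwise, and using `∑ r_{A,-B}(x) = |A| |B|`,
gives `E[A, B] ≤ k |A| |B| + (|B| - k) |T| |B|`. Finally
`∑ r_{A,B}(g) (r_{A,B}(g) - 1) = E[A, B] - |A| |B|`.
-/

open Finset

lemma Finset.addEnergy_neg_right {G : Type*} [AddCommGroup G] [DecidableEq G] (s t : Finset G) :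
    addEnergy s (-t) = addEnergy s t := by
  refine card_nbij' (fun x => (x.1, -x.2.2, -x.2.1)) (fun x => (x.1, -x.2.2, -x.2.1))
    ?_ ?_ (fun x _ => by simp) (fun x _ => by simp)
  all_goals
    rintro ⟨⟨a₁, a₂⟩, b₁, b₂⟩
    simp only [coe_filter, mem_product, mem_neg', neg_neg, Set.mem_ofPred_eq]
    rintro ⟨⟨ha, hb₁, hb₂⟩, h⟩
    refine ⟨⟨ha, hb₂, hb₁⟩, ?_⟩
    rwa [← sub_eq_add_neg, ← sub_eq_add_neg, sub_eq_sub_iff_add_eq_add]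

lemma Nat.mul_sub_one_add_self (n : ℕ) : n * (n - 1) + n = n ^ 2 := by
  cases n <;> simp [sq, Nat.mul_succ]

section rep

variable {G : Type*} [AddCommGroup G] [DecidableEq G] (A B : Finset G)

lemma rep_eq_zero_of_notMem_add {g : G} (hg : g ∉ A + B) : rep A B g = 0 := by
  rw [rep, card_eq_zero, filter_eq_empty_iff]
  rintro ⟨a, b⟩ hab rfl
  exact hg (add_mem_add (mem_product.1 hab).1 (mem_product.1 hab).2)

lemma rep_le_card_right (g : G) : rep A B g ≤ #B := by
  refine card_le_card_of_injOn Prod.snd (fun p hp => (mem_product.1 (mem_filter.1 hp).1).2) ?_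
  rintro ⟨a, b⟩ hab ⟨a', b'⟩ hab' (rfl : b = b')
  simp only [coe_filter, Set.mem_ofPred_eq] at hab hab'
  rw [add_right_cancel (hab.2.trans hab'.2.symm)]

lemma sum_rep : ∑ g ∈ A + B, rep A B g = #A * #B := by
  rw [← card_product]
  exact (card_eq_sum_card_fiberwise fun p hp =>
    add_mem_add (mem_product.1 hp).1 (mem_product.1 hp).2).symm

lemma sum_rep_sq : ∑ g ∈ A + B, rep A B g ^ 2 = addEnergy A B :=
  (addEnergy_eq_sum_sq' A B).symm

lemma finsum_rep_mul_rep_sub_one :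
    ∑ᶠ g, rep A B g * (rep A B g - 1) = addEnergy A B - #A * #B := by
  have hsupp : (Function.support fun g => rep A B g * (rep A B g - 1)) ⊆ ↑(A + B) :=
    fun g hg => by_contra fun hg' => hg (by simp [rep_eq_zero_of_notMem_add A B hg'])
  rw [finsum_eq_finsetSum_of_support_subset _ hsupp, ← sum_rep_sq, ← sum_rep,
    eq_tsub_iff_add_eq_of_le (sum_rep A B ▸ sum_rep_sq A B ▸ le_addEnergy), ← sum_add_distrib]
  simp only [Nat.mul_sub_one_add_self]

lemma addEnergy_le_of_rep_neg_le (T : Finset G) (k : ℕ)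
    (hrep : ∀ x, x ∉ T → rep A (-B) x ≤ k) :
    addEnergy A B ≤ #T * #B * (#B - k) + k * #A * #B := by
  set r := rep A (-B)
  have hpoint : ∀ x, r x ^ 2 ≤ k * r x + (#B - k) * (if x ∈ T then r x else 0) := by
    intro x
    split_ifs with hx
    · calc r x ^ 2 = r x * r x := sq _
        _ ≤ #B * r x := Nat.mul_le_mul_right _ (card_neg B ▸ rep_le_card_right A (-B) x)
        _ ≤ (k + (#B - k)) * r x := Nat.mul_le_mul_right _ (by omega)
        _ = _ := by ring
    · simpa [sq] using Nat.mul_le_mul_right (r x) (hrep x hx)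
  have hT : ∑ x ∈ A + -B, (if x ∈ T then r x else 0) ≤ #T * #B := by
    rw [← sum_filter, filter_mem_eq_inter]
    calc ∑ x ∈ (A + -B) ∩ T, r x
      _ ≤ ∑ x ∈ T, r x := sum_le_sum_of_subset inter_subset_right
      _ ≤ #T • #B :=
        sum_le_card_nsmul _ _ _ fun x _ => card_neg B ▸ rep_le_card_right A (-B) x
      _ = #T * #B := smul_eq_mul ..
  calc addEnergy A B = ∑ x ∈ A + -B, r x ^ 2 := by rw [sum_rep_sq, addEnergy_neg_right]
    _ ≤ ∑ x ∈ A + -B, (k * r x + (#B - k) * (if x ∈ T then r x else 0)) :=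
      sum_le_sum fun x _ => hpoint x
    _ = k * (#A * #B) + (#B - k) * ∑ x ∈ A + -B, (if x ∈ T then r x else 0) := by
      rw [sum_add_distrib, ← mul_sum, ← mul_sum, sum_rep, card_neg]
    _ ≤ k * (#A * #B) + (#B - k) * (#T * #B) := by gcongr
    _ = #T * #B * (#B - k) + k * #A * #B := by ring

end rep

theorem energy_upper_bound_general {G : Type*} [AddCommGroup G] [DecidableEq G]
    (A B T : Finset G) (k : ℕ)
    (hrep : ∀ x : G, x ∉ T → rep A (-B) x ≤ k) :
    ∑ᶠ g : G, rep A B g * (rep A B g - 1) ≤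
      T.card * B.card * (B.card - k) + (k - 1) * A.card * B.card := by
  have hk : k * #A * #B ≤ (k - 1) * #A * #B + #A * #B := by
    cases k <;> simp [add_mul]
  rw [finsum_rep_mul_rep_sub_one]
  have := addEnergy_le_of_rep_neg_le A B T k hrep
  omega

theorem energy_upper_bound {G : Type*} [AddCommGroup G] [DecidableEq G]
    (A B T : Finset G) (k : ℕ) (hk : 1 ≤ k) (hBk : k ≤ B.card)
    (hAB : B.card ≤ A.card) (hAT : T.card ≤ A.card)
    (hrep : ∀ x : G, x ∉ T → rep A (-B) x ≤ k) :
    ∑ᶠ g : G, rep A B g * (rep A B g - 1) ≤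
      T.card * B.card * (B.card - k) + (k - 1) * A.card * B.card :=
  energy_upper_bound_general A B T k hrep
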